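/- arXiv:1702.04951 — 2 statements merged into one kernel-verified Lean document; each statement's English description precedes it below -/
import Mathlib

section
/- Let H be a complex inner product space, and let D, B : H → H be linear maps that are symmetric (⟨Dx, y⟩ = ⟨x, Dy⟩ and ⟨Bx, y⟩ = ⟨x, By⟩ for all x, y). Assume that ‖Bs‖ = ‖s‖ for all s ∈ H, and that there is a constant C > 0 such that ‖(D ∘ B + B ∘ D)s‖ ≤ C‖s‖ for all s ∈ H. Then for every real ε with 0 < ε ≤ 1/(2C) and every s ∈ H, one has ‖(D + ε⁻¹ B)s‖² ≥ ‖Ds‖² + (1/(2ε²))‖s‖². (This is the abstract spectral estimate underlying Proposition 3.3 — invertibility of the deformed boundary operator D^{∂ℳ_R}_ε — and the interior estimate (3.16) of Proposition 4.4 in the paper: a symmetric operator deformed by a large multiple of a symmetric isometry with bounded anticommutator has a spectral gap of order 1/ε.) -/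
/-!
Expanding the square, `‖(D + ε⁻¹ B)s‖² = ‖Ds‖² + 2ε⁻¹ Re⟪Ds, Bs⟫ + ε⁻²‖s‖²`, using that `B` is an
isometry. Since `D` and `B` are symmetric, `2 Re⟪Ds, Bs⟫ = Re⟪s, (DB + BD)s⟫ ≥ -C‖s‖²`, and
`ε⁻¹C ≤ ε⁻²/2` as `ε ≤ 1/(2C)`: the cross term costs at most half of `ε⁻²‖s‖²`.
-/

open RCLike

section

variable {𝕜 E : Type*} [RCLike 𝕜] [NormedAddCommGroup E] [InnerProductSpace 𝕜 E]

theorem norm_add_real_smul_sq [NormedSpace ℝ E] [IsScalarTower ℝ 𝕜 E] (x y : E) (r : ℝ) :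
    ‖x + r • y‖ ^ 2 = ‖x‖ ^ 2 + 2 * r * re (inner 𝕜 x y) + r ^ 2 * ‖y‖ ^ 2 := by
  rw [@norm_add_sq 𝕜, RCLike.real_smul_eq_coe_smul (K := 𝕜), inner_smul_right, norm_smul,
    RCLike.re_ofReal_mul, norm_ofReal, mul_pow, sq_abs]
  ring

namespace LinearMap.IsSymmetric

variable {D B : E →ₗ[𝕜] E}

theorem two_mul_re_inner_eq_re_inner_anticomm (hD : D.IsSymmetric) (hB : B.IsSymmetric) (x : E) :
    2 * re (inner 𝕜 (D x) (B x)) = re (inner 𝕜 x ((D ∘ₗ B + B ∘ₗ D) x)) := by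
  rw [add_apply, comp_apply, comp_apply, inner_add_right, map_add, ← hD x (B x), ← hB x (D x),
    inner_re_symm (B x)]
  ring

theorem neg_mul_norm_sq_le_two_mul_re_inner (hD : D.IsSymmetric) (hB : B.IsSymmetric) {C : ℝ}
    {x : E} (hx : ‖(D ∘ₗ B + B ∘ₗ D) x‖ ≤ C * ‖x‖) :
    -(C * ‖x‖ ^ 2) ≤ 2 * re (inner 𝕜 (D x) (B x)) := by
  rw [two_mul_re_inner_eq_re_inner_anticomm hD hB, neg_le]
  calc -re (inner 𝕜 x ((D ∘ₗ B + B ∘ₗ D) x)) ≤ ‖inner 𝕜 x ((D ∘ₗ B + B ∘ₗ D) x)‖ :=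
        (neg_le_abs _).trans (abs_re_le_norm _)
    _ ≤ ‖x‖ * (C * ‖x‖) := (norm_inner_le_norm _ _).trans (by gcongr)
    _ = C * ‖x‖ ^ 2 := by ring

end LinearMap.IsSymmetric

end

theorem deformed_operator_spectral_gap_general {H : Type*} [NormedAddCommGroup H]
    [InnerProductSpace ℂ H] (D B : H →ₗ[ℂ] H)
    (hD : D.IsSymmetric) (hB : B.IsSymmetric)
    (hBiso : ∀ s : H, ‖B s‖ = ‖s‖)
    (C : ℝ)
    (hanti : ∀ s : H, ‖(D ∘ₗ B + B ∘ₗ D) s‖ ≤ C * ‖s‖)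
    (ε : ℝ) (hε : 0 < ε) (hεC : ε ≤ 1 / (2 * C)) (s : H) :
    ‖(D + ε⁻¹ • B) s‖ ^ 2 ≥ ‖D s‖ ^ 2 + (1 / (2 * ε ^ 2)) * ‖s‖ ^ 2 := by
  have hcross := hD.neg_mul_norm_sq_le_two_mul_re_inner hB (hanti s)
  have hC : C ≤ ε⁻¹ / 2 := by
    have hCpos : 0 < C := by simpa using hε.trans_le hεC
    rw [le_div_iff₀ (by positivity)] at hεC
    rw [le_div_iff₀ two_pos, ← one_div, le_div_iff₀ hε]
    linarith
  rw [LinearMap.add_apply, LinearMap.smul_apply, norm_add_real_smul_sq (𝕜 := ℂ), hBiso, ge_iff_le]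
  calc ‖D s‖ ^ 2 + 1 / (2 * ε ^ 2) * ‖s‖ ^ 2
      = ‖D s‖ ^ 2 - ε⁻¹ * (ε⁻¹ / 2 * ‖s‖ ^ 2) + ε⁻¹ ^ 2 * ‖s‖ ^ 2 := by field_simp; ring
    _ ≤ ‖D s‖ ^ 2 + ε⁻¹ * -(C * ‖s‖ ^ 2) + ε⁻¹ ^ 2 * ‖s‖ ^ 2 := by
      rw [mul_neg, ← sub_eq_add_neg]
      gcongr
    _ ≤ ‖D s‖ ^ 2 + ε⁻¹ * (2 * re (inner ℂ (D s) (B s))) + ε⁻¹ ^ 2 * ‖s‖ ^ 2 := by gcongr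
    _ = ‖D s‖ ^ 2 + 2 * ε⁻¹ * re (inner ℂ (D s) (B s)) + ε⁻¹ ^ 2 * ‖s‖ ^ 2 := by ring

/-- Abstract spectral estimate: if `D` and `B` are symmetric operators on a complex inner
product space, `B` is an isometry, and the anticommutator `DB + BD` is bounded by `C > 0`,
then for `0 < ε ≤ 1/(2C)` the deformed operator `D + ε⁻¹B` satisfies
`‖(D + ε⁻¹B)s‖² ≥ ‖Ds‖² + (1/(2ε²))‖s‖²`. -/
theorem deformed_operator_spectral_gap {H : Type*} [NormedAddCommGroup H]
    [InnerProductSpace ℂ H] (D B : H →ₗ[ℂ] H)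
    (hD : D.IsSymmetric) (hB : B.IsSymmetric)
    (hBiso : ∀ s : H, ‖B s‖ = ‖s‖)
    (C : ℝ) (hC : 0 < C)
    (hanti : ∀ s : H, ‖(D ∘ₗ B + B ∘ₗ D) s‖ ≤ C * ‖s‖)
    (ε : ℝ) (hε : 0 < ε) (hεC : ε ≤ 1 / (2 * C)) (s : H) :
    ‖(D + ε⁻¹ • B) s‖ ^ 2 ≥ ‖D s‖ ^ 2 + (1 / (2 * ε ^ 2)) * ‖s‖ ^ 2 :=
  deformed_operator_spectral_gap_general D B hD hB hBiso C hanti ε hε hεC s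
end

section
/- Let H be a complex inner product space, let T : H → H be a linear map, and let a₁, a₂, a₃ : H → H be linear maps satisfying ‖a₁ s‖² + ‖a₂ s‖² + ‖a₃ s‖² = ‖s‖² for every s ∈ H. Then for every s ∈ H, ‖Ts‖² ≥ (1/2) Σ_{i=1}^{3} ‖T(aᵢ s)‖² − Σ_{i=1}^{3} ‖(T ∘ aᵢ − aᵢ ∘ T)s‖². (This is the abstract form of the cut-off inequality (4.12) in the paper, where the aᵢ are multiplication by the functions α₁, α₂, α₃ with α₁² + α₂² + α₃² = 1 and the commutators [T, aᵢ] are the Clifford multiplications c(dαᵢ).) -/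
/-!
Write `T (aᵢ s) = [T, aᵢ] s + aᵢ (T s)`. Since `‖x + y‖² ≤ 2 (‖x‖² + ‖y‖²)`, summing over `i`
bounds `Σᵢ ‖T (aᵢ s)‖²` by twice `Σᵢ ‖[T, aᵢ] s‖² + Σᵢ ‖aᵢ (T s)‖²`, and the partition of unity
applied to the vector `T s` turns the last sum into `‖T s‖²`.
-/

theorem norm_add_sq_le {E : Type*} [SeminormedAddGroup E] (x y : E) :
    ‖x + y‖ ^ 2 ≤ 2 * (‖x‖ ^ 2 + ‖y‖ ^ 2) :=
  (pow_le_pow_left₀ (norm_nonneg _) (norm_add_le x y) 2).trans add_sq_le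

namespace LinearMap

variable {R M : Type*} [Semiring R] [SeminormedAddCommGroup M] [Module R M]

theorem norm_apply_apply_sq_le_commutator (T a : M →ₗ[R] M) (s : M) :
    ‖T (a s)‖ ^ 2 ≤ 2 * (‖(T ∘ₗ a - a ∘ₗ T) s‖ ^ 2 + ‖a (T s)‖ ^ 2) := by
  have hsplit : T (a s) = (T ∘ₗ a - a ∘ₗ T) s + a (T s) := by simp
  rw [hsplit]
  exact norm_add_sq_le _ _

theorem sum_norm_apply_apply_sq_le_commutator {ι : Type*} [Fintype ι] (T : M →ₗ[R] M)
    (a : ι → M →ₗ[R] M) (s : M) :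
    ∑ i, ‖T (a i s)‖ ^ 2 ≤
      2 * (∑ i, ‖(T ∘ₗ a i - a i ∘ₗ T) s‖ ^ 2 + ∑ i, ‖a i (T s)‖ ^ 2) := by
  rw [← Finset.sum_add_distrib, Finset.mul_sum]
  exact Finset.sum_le_sum fun i _ => norm_apply_apply_sq_le_commutator T (a i) s

end LinearMap

/-- Abstract cut-off inequality: if `a₁, a₂, a₃` form a quadratic partition of unity in the
sense that `‖a₁s‖² + ‖a₂s‖² + ‖a₃s‖² = ‖s‖²` for all `s`, then for any linear operator `T`,
`‖Ts‖² ≥ (1/2) Σᵢ ‖T(aᵢ s)‖² − Σᵢ ‖[T, aᵢ]s‖²`. -/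
theorem cutoff_inequality {H : Type*} [NormedAddCommGroup H] [InnerProductSpace ℂ H]
    (T : H →ₗ[ℂ] H) (a : Fin 3 → (H →ₗ[ℂ] H))
    (ha : ∀ s : H, ∑ i, ‖a i s‖ ^ 2 = ‖s‖ ^ 2) (s : H) :
    ‖T s‖ ^ 2 ≥
      (1 / 2) * ∑ i, ‖T (a i s)‖ ^ 2 - ∑ i, ‖(T ∘ₗ a i - a i ∘ₗ T) s‖ ^ 2 := by
  have hbound := LinearMap.sum_norm_apply_apply_sq_le_commutator T a s
  rw [ha (T s)] at hbound
  linarith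
end
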